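/- arXiv:1402.2041 — 3 statements merged into one kernel-verified Lean document; each statement's English description precedes it below -/
import Mathlib

section
/- Let G be a simple graph on vertex set [n] and let i ∈ [n]. In the polynomial ring S = K[x_1,...,x_n,y_1,...,y_n] with the lexicographic order induced by x_1 > ... > x_n > y_1 > ... > y_n, the initial ideal of (J_G, x_i, y_i) equals (in(J_G), x_i, y_i), where J_G is the binomial edge ideal of G. -/
open MvPolynomial SimpleGraph Classical
open scoped BigOperators

noncomputable section BinomialEdgeIdeals

variable (K : Type*) [Field K]

/-- `f i j = x_i y_j - x_j y_i` in `S = K[x_v, y_v : v ∈ V]`, where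
`x_v = X (Sum.inl v)` and `y_v = X (Sum.inr v)`. -/
def fij {V : Type*} (i j : V) : MvPolynomial (V ⊕ V) K :=
  X (Sum.inl i) * X (Sum.inr j) - X (Sum.inl j) * X (Sum.inr i)

/-- The binomial edge ideal of a simple graph `G` on a linearly ordered vertex set. -/
def beIdeal {V : Type*} [LinearOrder V] (G : SimpleGraph V) :
    Ideal (MvPolynomial (V ⊕ V) K) :=
  Ideal.span { f | ∃ i j : V, i < j ∧ G.Adj i j ∧ f = fij K i j }

/-- Exponent vectors, compared lexicographically with
`x_1 > x_2 > ⋯ > x_n > y_1 > ⋯ > y_n`: the variable `x_i` is encoded as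
`i - 1 ∈ Fin (n+n)` and `y_i` as `n + i - 1`, and a *smaller* code means a *bigger*
variable, so the `Finsupp.Lex` order (which compares at the smallest differing index)
is exactly the lexicographic monomial order induced by this order of the variables. -/
def expLex {n : ℕ} (m : (Fin n ⊕ Fin n) →₀ ℕ) : Lex (Fin (n + n) →₀ ℕ) :=
  toLex (Finsupp.equivMapDomain finSumFinEquiv m)

/-- The leading exponent (largest exponent vector in the support, in the lexicographic
order `x_1 > ⋯ > x_n > y_1 > ⋯ > y_n`) of a polynomial; junk value `0` for `p = 0`. -/
def leadExp {n : ℕ} (p : MvPolynomial (Fin n ⊕ Fin n) K) : (Fin n ⊕ Fin n) →₀ ℕ :=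
  Finsupp.equivMapDomain finSumFinEquiv.symm
    (ofLex (WithBot.unbotD (toLex 0) (p.support.image (fun m => expLex m)).max))

/-- The initial ideal of `I` with respect to the lexicographic order induced by
`x_1 > ⋯ > x_n > y_1 > ⋯ > y_n`. -/
def initialIdeal {n : ℕ} (I : Ideal (MvPolynomial (Fin n ⊕ Fin n) K)) :
    Ideal (MvPolynomial (Fin n ⊕ Fin n) K) :=
  Ideal.span { q | ∃ p ∈ I, p ≠ 0 ∧ q = monomial (leadExp K p) (1 : K) }

/-- The graded maximal ideal, generated by all the variables. -/
def varIdeal (V : Type*) : Ideal (MvPolynomial (V ⊕ V) K) :=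
  Ideal.span (Set.range X)

/-- `depth (S/I)`: the supremum of the lengths of regular sequences on `S/I`
consisting of elements of the graded maximal ideal. -/
def quotDepth {V : Type*} (I : Ideal (MvPolynomial (V ⊕ V) K)) : ℕ :=
  sSup { k | ∃ rs : List (MvPolynomial (V ⊕ V) K), rs.length = k ∧
    (∀ r ∈ rs, r ∈ varIdeal K V) ∧
    RingTheory.Sequence.IsRegular (MvPolynomial (V ⊕ V) K ⧸ I) rs }

/-- `p` is homogeneous of degree `d ∈ ℤ` (the zero polynomial having every degree). -/
def IsHomogInt {σ : Type*} (p : MvPolynomial σ K) (d : ℤ) : Prop :=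
  p = 0 ∨ ∃ m : ℕ, (m : ℤ) = d ∧ p.IsHomogeneous m

/-- A graded free resolution of `S/I`: free modules `F i = ⊕_j S(-j)^{b i j}`
(with basis indexed by `Σ j : ℤ, Fin (b i j)`), degree-zero (i.e. twist-compatible
homogeneous) differentials, exact, augmented by a degree-zero surjection onto `S ⧸ I`. -/
structure GradedFreeResolution {σ : Type*} (I : Ideal (MvPolynomial σ K)) where
  b : ℕ → ℤ →₀ ℕ
  diff : ∀ i : ℕ, ((Σ j : ℤ, Fin (b (i + 1) j)) →₀ MvPolynomial σ K) →ₗ[MvPolynomial σ K]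
      ((Σ j : ℤ, Fin (b i j)) →₀ MvPolynomial σ K)
  aug : ((Σ j : ℤ, Fin (b 0 j)) →₀ MvPolynomial σ K) →ₗ[MvPolynomial σ K]
      (MvPolynomial σ K ⧸ I)
  homog : ∀ (i : ℕ) (j : ℤ) (k : Fin (b (i + 1) j)) (j' : ℤ) (k' : Fin (b i j')),
    IsHomogInt K ((diff i (Finsupp.single ⟨j, k⟩ 1)) ⟨j', k'⟩) (j - j')
  aug_homog : ∀ (j : ℤ) (k : Fin (b 0 j)), ∃ p : MvPolynomial σ K,
    IsHomogInt K p j ∧ aug (Finsupp.single ⟨j, k⟩ 1) = Ideal.Quotient.mk I p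
  aug_surj : Function.Surjective aug
  exact_zero : Function.Exact (diff 0) aug
  exact_succ : ∀ i : ℕ, Function.Exact (diff (i + 1)) (diff i)

/-- The Castelnuovo–Mumford regularity of `S/I`: the least `r` such that `S/I` admits a
graded free resolution with all `i`-th syzygies generated in degrees `≤ i + r` (the
minimal graded free resolution realizes this minimum). -/
def regQuot {σ : Type*} (I : Ideal (MvPolynomial σ K)) : ℤ :=
  sInf { r : ℤ | ∃ F : GradedFreeResolution K I, ∀ i j, F.b i j ≠ 0 → j ≤ i + r }

/- ### Graph-theoretic notions -/

/-- `s` is a maximal clique of `G`. -/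
def IsMaxClique {V : Type*} (G : SimpleGraph V) (s : Finset V) : Prop :=
  G.IsClique ↑s ∧ ∀ t : Finset V, G.IsClique ↑t → s ⊆ t → s = t

/-- A graph is chordal if it has no induced cycle of length `≥ 4`. -/
def Chordal {V : Type*} (G : SimpleGraph V) : Prop :=
  ∀ m : ℕ, 4 ≤ m → IsEmpty (cycleGraph m ↪g G)

/-- A block graph: a chordal graph in which any two distinct maximal cliques meet in at
most one vertex. -/
def IsBlockGraph {V : Type*} (G : SimpleGraph V) : Prop :=
  Chordal G ∧ ∀ s t : Finset V, IsMaxClique G s → IsMaxClique G t → s ≠ t →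
    (s ∩ t).card ≤ 1

/-- The conditions (i) and (ii) defining a `C_ℓ`-graph, for a given sequence of cliques
`F 0, …, F (ℓ-1)`: each `F i` is a maximal clique with at least `2` vertices, consecutive
cliques meet in exactly one vertex, non-consecutive cliques are disjoint, and every edge
of `G` either lies in some `F i` or is a pendant edge `{j, k}` attached at an
intersection point `j` of two consecutive cliques, with `k` of degree `1`. -/
def IsCliqueSeq {V : Type*} (G : SimpleGraph V) (ℓ : ℕ) (F : Fin ℓ → Finset V) : Prop :=
  (∀ i, IsMaxClique G (F i) ∧ 2 ≤ (F i).card) ∧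
  (∀ i : Fin ℓ, ∀ h : i.val + 1 < ℓ, (F i ∩ F ⟨i.val + 1, h⟩).card = 1) ∧
  (∀ i j : Fin ℓ, i < j → j.val ≠ i.val + 1 → F i ∩ F j = ∅) ∧
  (∀ e ∈ G.edgeSet, (∃ i, ∀ v ∈ e, v ∈ F i) ∨
    (∃ (jv kv : V) (i : Fin ℓ) (h : i.val + 1 < ℓ), e = s(jv, kv) ∧
      jv ∈ F i ∩ F ⟨i.val + 1, h⟩ ∧ (G.neighborSet kv).ncard = 1))

/-- A `C_ℓ`-graph. -/
def IsCLGraph {V : Type*} (G : SimpleGraph V) (ℓ : ℕ) : Prop :=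
  G.Connected ∧ ∃ F : Fin ℓ → Finset V, IsCliqueSeq G ℓ F

/-- `G` has an induced path of length `k` (an induced subgraph isomorphic to the path
graph with `k` edges). -/
def HasInducedPathLen {V : Type*} (G : SimpleGraph V) (k : ℕ) : Prop :=
  Nonempty (pathGraph (k + 1) ↪g G)

/-- The longest induced path of `G` has length `ℓ`. -/
def LongestInducedPathLen {V : Type*} (G : SimpleGraph V) (ℓ : ℕ) : Prop :=
  HasInducedPathLen G ℓ ∧ ∀ k, HasInducedPathLen G k → k ≤ ℓ

/-- The longest path of `G` has length `ℓ`. -/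
def LongestPathLen {V : Type*} (G : SimpleGraph V) (ℓ : ℕ) : Prop :=
  (∃ (u v : V) (p : G.Walk u v), p.IsPath ∧ p.length = ℓ) ∧
  ∀ (u v : V) (p : G.Walk u v), p.IsPath → p.length ≤ ℓ

/-- A caterpillar tree: a tree containing a path `P` such that every vertex is a vertex
of `P` or adjacent to a vertex of `P`. -/
def IsCaterpillar {V : Type*} (T : SimpleGraph V) : Prop :=
  T.IsTree ∧ ∃ (u v : V) (p : T.Walk u v), p.IsPath ∧
    ∀ w : V, w ∈ p.support ∨ ∃ z ∈ p.support, T.Adj w z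

/-- The spider tree on `ℓ + 3` vertices: a path `0 — 1 — ⋯ — ℓ` together with a path
`k — (ℓ+1) — (ℓ+2)` of length 2 attached at the vertex `k`. -/
def spider (ℓ k : ℕ) : SimpleGraph (Fin (ℓ + 3)) :=
  SimpleGraph.fromRel (fun a b =>
    (a.val + 1 = b.val ∧ b.val ≤ ℓ) ∨ (a.val = k ∧ b.val = ℓ + 1) ∨
    (a.val = ℓ + 1 ∧ b.val = ℓ + 2))

/-- The graph obtained from `G` by deleting the vertices in `T` (keeping the ambient
vertex set: the vertices of `T` simply become isolated). -/
def delVerts {V : Type*} (G : SimpleGraph V) (T : Set V) : SimpleGraph V where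
  Adj a b := G.Adj a b ∧ a ∉ T ∧ b ∉ T
  symm := ⟨fun a b h => ⟨h.1.symm, h.2.2, h.2.1⟩⟩
  loopless := ⟨fun a h => G.loopless.irrefl a h.1⟩

/-- The prime ideal `P_T(G)`: generated by `x_i, y_i` for `i ∈ T`, together with the
binomial edge ideals of the complete graphs on the connected components of the
restriction of `G` to the complement of `T`. -/
def cutPrime {V : Type*} [LinearOrder V] (G : SimpleGraph V) (T : Set V) :
    Ideal (MvPolynomial (V ⊕ V) K) :=
  Ideal.span ({ q | ∃ i ∈ T, q = X (Sum.inl i) ∨ q = X (Sum.inr i) } ∪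
    { q | ∃ i j : V, i < j ∧ i ∉ T ∧ j ∉ T ∧ (delVerts G T).Reachable i j ∧
      q = fij K i j })

/-- `c(T)`: the number of connected components of the restriction of `G` to the
complement of `T`. -/
def numComp {V : Type*} (G : SimpleGraph V) (T : Set V) : ℕ :=
  Nat.card ((G.induce Tᶜ).ConnectedComponent)

/-- `F 0, …, F (r-1)` is a leaf order on the maximal cliques of `G`: it enumerates them
without repetition, and each `F k` with `k > 0` is a leaf of the simplicial complex
generated by `F 0, …, F k`, i.e. admits a branch `F b`, `b < k`. -/
def IsLeafOrder {V : Type*} (G : SimpleGraph V) (r : ℕ) (F : Fin r → Finset V) : Prop :=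
  Function.Injective F ∧ (Set.range F = { s | IsMaxClique G s }) ∧
  ∀ k : Fin r, 0 < k.val → ∃ b : Fin r, b < k ∧
    ∀ m : Fin r, m < k → F m ∩ F k ⊆ F b ∩ F k

/-- An admissible path from `i` to `j` (`i < j`) in `G`: a path (recorded as its list of
vertices) with pairwise distinct vertices, whose interior vertices `v` all satisfy
`v < i` or `v > j`, and which is minimal: no proper subsequence with the same endpoints
is again a path of `G`. -/
def IsAdmissiblePath {n : ℕ} (G : SimpleGraph (Fin n)) (i j : Fin n)
    (π : List (Fin n)) : Prop :=
  i < j ∧ π.Chain' G.Adj ∧ π.head? = some i ∧ π.getLast? = some j ∧ π.Nodup ∧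
  (∀ v ∈ π, v ≠ i → v ≠ j → (v < i ∨ j < v)) ∧
  ∀ π' : List (Fin n), π' ≠ π → π'.Sublist π → π'.head? = some i →
    π'.getLast? = some j → ¬ π'.Chain' G.Adj

/-- `u_π = (∏_{v ∈ π, v > j} x_v) (∏_{v ∈ π, v < i} y_v)` for a path `π` from `i` to `j`. -/
def uPath {n : ℕ} (i j : Fin n) (π : List (Fin n)) : MvPolynomial (Fin n ⊕ Fin n) K :=
  ((π.filter (fun v => j < v)).map (fun v => X (Sum.inl v))).prod *
  ((π.filter (fun v => v < i)).map (fun v => X (Sum.inr v))).prod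

/-- `Γ` is the reduced Gröbner basis of `I` with respect to the lexicographic order
`x_1 > ⋯ > x_n > y_1 > ⋯ > y_n`: `Γ ⊆ I`, all elements are monic, the leading monomials
of `Γ` generate the initial ideal of `I`, and no monomial of an element of `Γ` is
divisible by the leading monomial of another element. -/
def IsReducedGB {n : ℕ} (Γ : Set (MvPolynomial (Fin n ⊕ Fin n) K))
    (I : Ideal (MvPolynomial (Fin n ⊕ Fin n) K)) : Prop :=
  Γ ⊆ (I : Set (MvPolynomial (Fin n ⊕ Fin n) K)) ∧
  (∀ g ∈ Γ, g ≠ 0 ∧ MvPolynomial.coeff (leadExp K g) g = 1) ∧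
  initialIdeal K I = Ideal.span ((fun g => (monomial (leadExp K g) (1 : K))) '' Γ) ∧
  ∀ g ∈ Γ, ∀ g' ∈ Γ, g' ≠ g → ∀ m ∈ g.support, ¬ leadExp K g' ≤ m

end BinomialEdgeIdeals

/-! Setting `x_i = y_i = 0` maps `J_G` into itself and only deletes terms of a polynomial. Hence
if the leading monomial of `f ∈ J_G + (x_i, y_i)` involves neither `x_i` nor `y_i`, it is also the
leading monomial of the image of `f`, which lies in `J_G`; otherwise it lies in `(x_i, y_i)`. -/

namespace MvPolynomial

variable {σ R : Type*} [CommSemiring R]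

noncomputable def killVars (s : Set σ) : MvPolynomial σ R →ₐ[R] MvPolynomial σ R :=
  aeval fun v => if v ∈ s then 0 else X v

theorem killVars_monomial (s : Set σ) (u : σ →₀ ℕ) (a : R) :
    killVars s (monomial u a) = if ∀ v ∈ s, u v = 0 then monomial u a else 0 := by
  rw [killVars, aeval_monomial, algebraMap_eq]
  split_ifs with hu
  · rw [monomial_eq]
    congr 1
    refine Finset.prod_congr rfl fun v hv => ?_
    dsimp only
    rw [if_neg fun hvs => Finsupp.mem_support_iff.mp hv (hu v hvs)]
  · push Not at hu
    obtain ⟨v, hvs, hv⟩ := hu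
    refine mul_eq_zero_of_right _ (Finset.prod_eq_zero (Finsupp.mem_support_iff.mpr hv) ?_)
    dsimp only
    rw [if_pos hvs, zero_pow hv]

theorem coeff_killVars (s : Set σ) (p : MvPolynomial σ R) (m : σ →₀ ℕ) :
    coeff m (killVars s p) = if ∀ v ∈ s, m v = 0 then coeff m p else 0 := by
  induction p using MvPolynomial.induction_on' with
  | monomial u a =>
    rw [killVars_monomial, apply_ite (coeff m), coeff_zero, coeff_monomial]
    split_ifs <;> first | rfl | (subst_vars; contradiction)
  | add p q hp hq =>
    rw [map_add, coeff_add, hp, hq, coeff_add]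
    split_ifs <;> simp

theorem mem_support_killVars {s : Set σ} {p : MvPolynomial σ R} {m : σ →₀ ℕ} :
    m ∈ (killVars s p).support ↔ m ∈ p.support ∧ ∀ v ∈ s, m v = 0 := by
  rw [mem_support_iff, mem_support_iff, coeff_killVars]
  split_ifs with hm
  · exact (and_iff_left hm).symm
  · simp [hm]

theorem killVars_eq_zero_of_mem_span {s : Set σ} {p : MvPolynomial σ R}
    (hp : p ∈ Ideal.span (X '' s)) : killVars s p = 0 := by
  rw [← support_eq_empty, Finset.eq_empty_iff_forall_notMem]
  intro m hm
  rw [mem_support_killVars] at hm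
  obtain ⟨v, hvs, hv⟩ := mem_ideal_span_X_image.mp hp m hm.1
  exact hv (hm.2 v hvs)

end MvPolynomial

section LexOrder

variable {K : Type*} [Field K] {n : ℕ}

theorem expLex_injective : Function.Injective (expLex (n := n)) := fun _ _ h =>
  (Finsupp.equivCongrLeft finSumFinEquiv).injective (toLex.injective h)

theorem expLex_leadExp {p : MvPolynomial (Fin n ⊕ Fin n) K} (hp : p ≠ 0) :
    expLex (leadExp K p) =
      (p.support.image expLex).max' ((support_nonempty.mpr hp).image _) := by
  rw [leadExp, ← Finset.coe_max' ((support_nonempty.mpr hp).image _), WithBot.unbotD_coe,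
    expLex, ← Finsupp.equivCongrLeft_apply, ← Finsupp.equivCongrLeft_apply,
    ← Finsupp.equivCongrLeft_symm, Equiv.apply_symm_apply, toLex_ofLex]

theorem leadExp_mem_support {p : MvPolynomial (Fin n ⊕ Fin n) K} (hp : p ≠ 0) :
    leadExp K p ∈ p.support := by
  obtain ⟨m, hm, hm_eq⟩ :=
    Finset.mem_image.mp (Finset.max'_mem _ ((support_nonempty.mpr hp).image expLex))
  rwa [expLex_injective ((expLex_leadExp hp).trans hm_eq.symm)]

theorem expLex_le_expLex_leadExp {p : MvPolynomial (Fin n ⊕ Fin n) K}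
    {m : (Fin n ⊕ Fin n) →₀ ℕ} (hm : m ∈ p.support) :
    expLex m ≤ expLex (leadExp K p) := by
  rw [expLex_leadExp (ne_zero_iff.mpr ⟨m, mem_support_iff.mp hm⟩)]
  exact Finset.le_max' _ _ (Finset.mem_image_of_mem _ hm)

theorem leadExp_eq_of_support_subset {p q : MvPolynomial (Fin n ⊕ Fin n) K}
    (hqp : q.support ⊆ p.support) (hq : leadExp K p ∈ q.support) :
    leadExp K q = leadExp K p :=
  have hq0 : q ≠ 0 := ne_zero_iff.mpr ⟨_, mem_support_iff.mp hq⟩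
  expLex_injective <| le_antisymm
    (expLex_le_expLex_leadExp (hqp (leadExp_mem_support hq0))) (expLex_le_expLex_leadExp hq)

theorem leadExp_X (w : Fin n ⊕ Fin n) :
    leadExp K (X w : MvPolynomial _ K) = Finsupp.single w 1 := by
  simpa [support_X] using leadExp_mem_support (X_ne_zero (R := K) w)

theorem monomial_leadExp_mem_initialIdeal {I : Ideal (MvPolynomial (Fin n ⊕ Fin n) K)}
    {p : MvPolynomial (Fin n ⊕ Fin n) K} (hp : p ∈ I) (hp0 : p ≠ 0) :
    monomial (leadExp K p) 1 ∈ initialIdeal K I :=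
  Ideal.subset_span ⟨p, hp, hp0, rfl⟩

theorem initialIdeal_mono {I J : Ideal (MvPolynomial (Fin n ⊕ Fin n) K)} (h : I ≤ J) :
    initialIdeal K I ≤ initialIdeal K J :=
  Ideal.span_mono fun _ ⟨p, hp, hp0, hq⟩ => ⟨p, h hp, hp0, hq⟩

theorem X_mem_initialIdeal {I : Ideal (MvPolynomial (Fin n ⊕ Fin n) K)} {w : Fin n ⊕ Fin n}
    (hw : X w ∈ I) : X w ∈ initialIdeal K I := by
  simpa [leadExp_X, ← X.eq_def] using monomial_leadExp_mem_initialIdeal hw (X_ne_zero w)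

theorem initialIdeal_add_span_X_image {I : Ideal (MvPolynomial (Fin n ⊕ Fin n) K)}
    {s : Set (Fin n ⊕ Fin n)} (hI : ∀ p ∈ I, killVars s p ∈ I) :
    initialIdeal K (I + Ideal.span (X '' s)) = initialIdeal K I + Ideal.span (X '' s) := by
  refine le_antisymm (Ideal.span_le.mpr ?_)
    (sup_le (initialIdeal_mono le_sup_left) (Ideal.span_le.mpr ?_))
  · rintro _ ⟨p, hp, hp0, rfl⟩
    by_cases hs : ∀ v ∈ s, leadExp K p v = 0
    · obtain ⟨f, hf, g, hg, rfl⟩ := Submodule.mem_sup.mp hp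
      have hkill : killVars s (f + g) ∈ I := by
        rw [map_add, killVars_eq_zero_of_mem_span hg, add_zero]
        exact hI f hf
      have hlead : leadExp K (f + g) ∈ (killVars s (f + g)).support :=
        mem_support_killVars.mpr ⟨leadExp_mem_support hp0, hs⟩
      rw [← leadExp_eq_of_support_subset (fun _ hm => (mem_support_killVars.mp hm).1) hlead]
      exact Ideal.mem_sup_left (monomial_leadExp_mem_initialIdeal hkill (ne_zero_iff.mpr
        ⟨_, mem_support_iff.mp hlead⟩))
    · refine Ideal.mem_sup_right (mem_ideal_span_X_image.mpr fun m hm => ?_)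
      rw [support_monomial, if_neg one_ne_zero, Finset.mem_singleton] at hm
      push Not at hs
      exact hm ▸ hs
  · rintro _ ⟨v, hv, rfl⟩
    exact X_mem_initialIdeal (Ideal.mem_sup_right (Ideal.subset_span ⟨v, hv, rfl⟩))

end LexOrder

theorem killVars_mem_beIdeal {K V : Type*} [Field K] [LinearOrder V] (G : SimpleGraph V)
    (i : V) {p : MvPolynomial (V ⊕ V) K} (hp : p ∈ beIdeal K G) :
    killVars {Sum.inl i, Sum.inr i} p ∈ beIdeal K G := by
  suffices h : (beIdeal K G).map (killVars {Sum.inl i, Sum.inr i}) ≤ beIdeal K G from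
    h (Ideal.mem_map_of_mem _ hp)
  rw [beIdeal, Ideal.map_span, Ideal.span_le]
  rintro _ ⟨_, ⟨j, k, hjk, hadj, rfl⟩, rfl⟩
  by_cases hj : j = i ∨ k = i
  · rcases hj with rfl | rfl <;> simp [fij, killVars]
  · push Not at hj
    have hfix : killVars {Sum.inl i, Sum.inr i} (fij K j k) = fij K j k := by
      simp [fij, killVars, hj.1, hj.2]
    rw [SetLike.mem_coe, hfix]
    exact Ideal.subset_span ⟨j, k, hjk, hadj, rfl⟩

/-- For a simple graph `G` on `[n]` and `i ∈ [n]`, in the lex order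
`x_1 > ⋯ > x_n > y_1 > ⋯ > y_n` one has `in(J_G, x_i, y_i) = (in(J_G), x_i, y_i)`. -/
theorem stmt0 (K : Type*) [Field K] (n : ℕ) (G : SimpleGraph (Fin n)) (i : Fin n) :
    initialIdeal K (beIdeal K G + Ideal.span {X (Sum.inl i), X (Sum.inr i)}) =
      initialIdeal K (beIdeal K G) + Ideal.span {X (Sum.inl i), X (Sum.inr i)} := by
  rw [← Set.image_pair]
  exact initialIdeal_add_span_X_image fun _ => killVars_mem_beIdeal G i
end

section
/- The longest induced path of a C_ℓ-graph has length exactly ℓ. -/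
open MvPolynomial SimpleGraph Classical
open scoped BigOperators

/-! A vertex with two non-adjacent neighbours is not a pendant leaf and its neighbourhood is
not a clique, so it lies in two cliques of the sequence; these are consecutive, so the vertex
is one of the `ℓ - 1` junctions `F i ∩ F (i + 1)`. Hence the `k - 1` interior vertices of an
induced path of length `k` are distinct junctions, and `k ≤ ℓ`. Conversely, a vertex of `F 0`
other than the first junction, the junctions in order, and a vertex of `F (ℓ - 1)` other than
the last junction form an induced path of length `ℓ`. -/

open Finset

section InducedPath

variable {V : Type*} {G : SimpleGraph V}

lemma SimpleGraph.ncard_neighborSet_ne_one {v x y : V} (hx : G.Adj v x) (hy : G.Adj v y)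
    (hxy : x ≠ y) : (G.neighborSet v).ncard ≠ 1 := by
  intro h
  obtain ⟨z, hz⟩ := Set.ncard_eq_one.mp h
  have hx' : x ∈ G.neighborSet v := hx
  have hy' : y ∈ G.neighborSet v := hy
  rw [hz, Set.mem_singleton_iff] at hx' hy'
  exact hxy (hx'.trans hy'.symm)

lemma hasInducedPathLen_iff {n : ℕ} :
    HasInducedPathLen G n ↔ ∃ w : ℕ → V, Set.InjOn w (Set.Iic n) ∧
      ∀ s ≤ n, ∀ t ≤ n, (G.Adj (w s) (w t) ↔ s + 1 = t ∨ t + 1 = s) := by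
  constructor
  · rintro ⟨f⟩
    refine ⟨fun t => f ⟨min t n, by omega⟩, fun s hs t ht hst => ?_, fun s hs t ht => ?_⟩
    · have := congrArg Fin.val (f.injective hst)
      simp only [Set.mem_Iic] at hs ht this
      omega
    · simp only [f.map_adj_iff, pathGraph_adj]
      omega
  · rintro ⟨w, hinj, hadj⟩
    refine ⟨⟨fun t => w t, fun s t hst => Fin.ext ?_⟩, fun {s t} => ?_⟩
    · exact hinj (by simp only [Set.mem_Iic]; omega) (by simp only [Set.mem_Iic]; omega) hst
    · simp only [pathGraph_adj]
      exact hadj s (by omega) t (by omega)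

end InducedPath

section CliqueSeq

variable {V : Type*} {G : SimpleGraph V} {ℓ : ℕ} {F : Fin ℓ → Finset V}

def cliqueAt (F : Fin ℓ → Finset V) (i : ℕ) : Finset V :=
  if h : i < ℓ then F ⟨i, h⟩ else ∅

lemma cliqueAt_of_lt {i : ℕ} (hi : i < ℓ) : cliqueAt F i = F ⟨i, hi⟩ := dif_pos hi

lemma lt_of_mem_cliqueAt {i : ℕ} {v : V} (hv : v ∈ cliqueAt F i) : i < ℓ := by
  by_contra hi
  simp [cliqueAt, hi] at hv

noncomputable def junctions (F : Fin ℓ → Finset V) : Finset V :=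
  (range (ℓ - 1)).biUnion fun i => cliqueAt F i ∩ cliqueAt F (i + 1)

lemma mem_junctions {v : V} :
    v ∈ junctions F ↔ ∃ i, v ∈ cliqueAt F i ∧ v ∈ cliqueAt F (i + 1) := by
  simp only [junctions, mem_biUnion, mem_range, mem_inter]
  exact ⟨fun ⟨i, _, hv⟩ => ⟨i, hv⟩,
    fun ⟨i, hv⟩ => ⟨i, by have := lt_of_mem_cliqueAt hv.2; omega, hv⟩⟩

namespace IsCliqueSeq

variable (hF : IsCliqueSeq G ℓ F)
include hF

lemma adj_of_mem_cliqueAt {i : ℕ} {x y : V} (hx : x ∈ cliqueAt F i) (hy : y ∈ cliqueAt F i)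
    (hxy : x ≠ y) : G.Adj x y := by
  have hi := lt_of_mem_cliqueAt hx
  rw [cliqueAt_of_lt hi] at hx hy
  exact (hF.1 ⟨i, hi⟩).1.1 hx hy hxy

lemma one_lt_card_cliqueAt {i : ℕ} (hi : i < ℓ) : 1 < #(cliqueAt F i) := by
  rw [cliqueAt_of_lt hi]
  exact (hF.1 ⟨i, hi⟩).2

lemma card_cliqueAt_inter_succ {i : ℕ} (hi : i + 1 < ℓ) :
    #(cliqueAt F i ∩ cliqueAt F (i + 1)) = 1 := by
  rw [cliqueAt_of_lt (by omega), cliqueAt_of_lt hi]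
  exact hF.2.1 ⟨i, by omega⟩ hi

lemma eq_of_mem_cliqueAt_inter_succ {i : ℕ} {x y : V}
    (hx : x ∈ cliqueAt F i ∩ cliqueAt F (i + 1)) (hy : y ∈ cliqueAt F i ∩ cliqueAt F (i + 1)) :
    x = y :=
  card_le_one.mp (hF.card_cliqueAt_inter_succ (lt_of_mem_cliqueAt (mem_inter.mp hx).2)).le
    x hx y hy

lemma le_succ_of_mem_cliqueAt {i j : ℕ} {v : V} (hi : v ∈ cliqueAt F i)
    (hj : v ∈ cliqueAt F j) : j ≤ i + 1 := by
  by_contra hji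
  have hjℓ := lt_of_mem_cliqueAt hj
  rw [cliqueAt_of_lt (by omega)] at hi
  rw [cliqueAt_of_lt hjℓ] at hj
  have hdisj := hF.2.2.1 ⟨i, by omega⟩ ⟨j, hjℓ⟩ (Fin.mk_lt_mk.mpr (by omega)) (by simp; omega)
  exact notMem_empty v (hdisj ▸ mem_inter.mpr ⟨hi, hj⟩)

lemma mem_cliqueAt_iff_of_mem_inter_succ {i j : ℕ} {v : V}
    (hv : v ∈ cliqueAt F j ∩ cliqueAt F (j + 1)) : v ∈ cliqueAt F i ↔ i = j ∨ i = j + 1 := by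
  rw [mem_inter] at hv
  refine ⟨fun h => ?_, by rintro (rfl | rfl); exacts [hv.1, hv.2]⟩
  have := hF.le_succ_of_mem_cliqueAt hv.1 h
  have := hF.le_succ_of_mem_cliqueAt h hv.2
  omega

lemma mem_cliqueAt_iff_of_not_mem_adjacent {i j : ℕ} {v : V} (hv : v ∈ cliqueAt F j)
    (hpred : ∀ i, i + 1 = j → v ∉ cliqueAt F i) (hsucc : v ∉ cliqueAt F (j + 1)) :
    v ∈ cliqueAt F i ↔ i = j := by
  refine ⟨fun h => ?_, by rintro rfl; exact hv⟩
  have := hF.le_succ_of_mem_cliqueAt hv h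
  rcases lt_trichotomy i j with hij | rfl | hij
  · exact absurd h (hpred i (by have := hF.le_succ_of_mem_cliqueAt h hv; omega))
  · rfl
  · obtain rfl : i = j + 1 := by omega
    exact absurd h hsucc

lemma card_junctions_le : #(junctions F) ≤ ℓ - 1 := by
  calc #(junctions F) ≤ #(range (ℓ - 1)) * 1 :=
        card_biUnion_le_card_mul _ _ _ fun i hi =>
          (hF.card_cliqueAt_inter_succ (by rw [mem_range] at hi; omega)).le
    _ = ℓ - 1 := by simp

lemma pos_of_adj {u v : V} (h : G.Adj u v) : 0 < ℓ := by
  rcases hF.2.2.2 s(u, v) h with ⟨i, -⟩ | ⟨-, -, i, -⟩ <;> exact i.pos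

lemma cases_of_adj {u v : V} (h : G.Adj u v) :
    (∃ i, u ∈ cliqueAt F i ∧ v ∈ cliqueAt F i) ∨ (G.neighborSet u).ncard = 1 ∨
      (u ∈ junctions F ∧ (G.neighborSet v).ncard = 1) := by
  rcases hF.2.2.2 s(u, v) h with ⟨i, hi⟩ | ⟨j, k, i, hi, he, hj, hk⟩
  · left
    refine ⟨i, ?_, ?_⟩ <;> rw [cliqueAt_of_lt i.isLt] <;> simp [hi]
  · rw [mem_inter] at hj
    rcases Sym2.eq_iff.mp he with ⟨rfl, rfl⟩ | ⟨rfl, rfl⟩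
    · refine Or.inr (Or.inr ⟨mem_junctions.mpr ⟨i, ?_, ?_⟩, hk⟩)
      · rw [cliqueAt_of_lt i.isLt]; exact hj.1
      · rw [cliqueAt_of_lt hi]; exact hj.2
    · exact Or.inr (Or.inl hk)

lemma mem_junctions_of_adj_of_adj {v x y : V} (hx : G.Adj v x) (hy : G.Adj v y) (hxy : x ≠ y)
    (hnxy : ¬ G.Adj x y) : v ∈ junctions F := by
  have hdeg := ncard_neighborSet_ne_one hx hy hxy
  rcases hF.cases_of_adj hx with ⟨m, hvm, hxm⟩ | h1 | ⟨hv, -⟩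
  rotate_left
  · exact absurd h1 hdeg
  · exact hv
  rcases hF.cases_of_adj hy with ⟨n, hvn, hyn⟩ | h1 | ⟨hv, -⟩
  rotate_left
  · exact absurd h1 hdeg
  · exact hv
  rcases lt_trichotomy m n with hmn | rfl | hnm
  · obtain rfl : n = m + 1 := by have := hF.le_succ_of_mem_cliqueAt hvm hvn; omega
    exact mem_junctions.mpr ⟨m, hvm, hvn⟩
  · exact absurd (hF.adj_of_mem_cliqueAt hxm hyn hxy) hnxy
  · obtain rfl : m = n + 1 := by have := hF.le_succ_of_mem_cliqueAt hvn hvm; omega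
    exact mem_junctions.mpr ⟨n, hvn, hvm⟩

theorem le_of_hasInducedPathLen {k : ℕ} (h : HasInducedPathLen G k) : k ≤ ℓ := by
  obtain ⟨w, hinj, hadj⟩ := hasInducedPathLen_iff.mp h
  rcases Nat.eq_zero_or_pos k with rfl | hk
  · exact Nat.zero_le _
  have hℓ := hF.pos_of_adj ((hadj 0 (by omega) 1 (by omega)).mpr (by omega))
  have hinterior : Set.MapsTo w (Ioo 0 k) (junctions F) := by
    intro t ht
    rw [coe_Ioo, Set.mem_Ioo] at ht
    refine hF.mem_junctions_of_adj_of_adj (x := w (t - 1)) (y := w (t + 1))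
      ((hadj t (by omega) _ (by omega)).mpr (by omega))
      ((hadj t (by omega) _ (by omega)).mpr (by omega)) (fun he => ?_)
      (by rw [hadj _ (by omega) _ (by omega)]; omega)
    have := hinj (by simp only [Set.mem_Iic]; omega) (by simp only [Set.mem_Iic]; omega) he
    omega
  have hIoo : (Ioo 0 k : Set ℕ) ⊆ Set.Iic k := fun t ht => by
    simp only [coe_Ioo, Set.mem_Ioo, Set.mem_Iic] at ht ⊢
    omega
  have hcard := (card_le_card_of_injOn w hinterior (hinj.mono hIoo)).trans hF.card_junctions_le
  rw [Nat.card_Ioo] at hcard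
  omega

lemma hasInducedPathLen_of_mem_cliqueAt_iff (w : ℕ → V)
    (hmem : ∀ t ≤ ℓ, ∀ i < ℓ, w t ∈ cliqueAt F i ↔ i = t ∨ i + 1 = t)
    (hne : ∀ t < ℓ, w t ≠ w (t + 1)) : HasInducedPathLen G ℓ := by
  have hlt : ∀ s t, s < t → t ≤ ℓ → w s ≠ w t := by
    intro s t hst ht he
    have := (hmem t ht s (by omega)).mp (he ▸ (hmem s (by omega) s (by omega)).mpr (Or.inl rfl))
    obtain rfl : t = s + 1 := by omega
    exact hne s (by omega) he
  have hsucc : ∀ t < ℓ, G.Adj (w t) (w (t + 1)) := fun t ht =>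
    hF.adj_of_mem_cliqueAt ((hmem t ht.le t ht).mpr (Or.inl rfl))
      ((hmem (t + 1) ht t ht).mpr (Or.inr rfl)) (hne t ht)
  have hfar : ∀ s t, s + 2 ≤ t → t ≤ ℓ → ¬ G.Adj (w s) (w t) := by
    intro s t hst ht hadj
    rcases hF.cases_of_adj hadj with ⟨i, hs, ht'⟩ | hdeg | ⟨-, hdeg⟩
    · have hi := lt_of_mem_cliqueAt hs
      have := (hmem s (by omega) i hi).mp hs
      have := (hmem t ht i hi).mp ht'
      omega
    · exact ncard_neighborSet_ne_one (hsucc s (by omega)) hadj (hlt _ _ (by omega) ht) hdeg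
    · have hpred := (hsucc (t - 1) (by omega)).symm
      rw [Nat.sub_add_cancel (by omega)] at hpred
      exact ncard_neighborSet_ne_one hpred hadj.symm (hlt _ _ (by omega) (by omega)).symm hdeg
  refine hasInducedPathLen_iff.mpr ⟨w, fun s hs t ht he => ?_, fun s hs t ht => ⟨fun h => ?_, ?_⟩⟩
  · simp only [Set.mem_Iic] at hs ht
    rcases lt_trichotomy s t with hst | hst | hst
    · exact absurd he (hlt s t hst ht)
    · exact hst
    · exact absurd he.symm (hlt t s hst hs)
  · rcases lt_trichotomy s t with hst | rfl | hst
    · by_contra hst'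
      exact hfar s t (by omega) ht h
    · exact absurd h (G.loopless.irrefl _)
    · by_contra hst'
      exact hfar t s (by omega) hs h.symm
  · rintro (rfl | rfl)
    · exact hsucc s (by omega)
    · exact (hsucc t (by omega)).symm

lemma exists_forall_mem_cliqueAt_inter_succ [Nonempty V] :
    ∃ c : ℕ → V, ∀ i, i + 1 < ℓ → c i ∈ cliqueAt F i ∩ cliqueAt F (i + 1) := by
  refine ⟨fun i => Classical.epsilon (· ∈ cliqueAt F i ∩ cliqueAt F (i + 1)),
    fun i hi => Classical.epsilon_spec ?_⟩
  exact card_pos.mp (by rw [hF.card_cliqueAt_inter_succ hi]; exact one_pos)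

lemma hasInducedPathLen_of_two_le [Nonempty V] (hℓ : 2 ≤ ℓ) : HasInducedPathLen G ℓ := by
  obtain ⟨c, hc⟩ := hF.exists_forall_mem_cliqueAt_inter_succ
  obtain ⟨a, ha, hac⟩ := exists_mem_ne (hF.one_lt_card_cliqueAt (i := 0) (by omega)) (c 0)
  obtain ⟨b, hb, hbc⟩ := exists_mem_ne (hF.one_lt_card_cliqueAt (i := ℓ - 1) (by omega))
    (c (ℓ - 2))
  have hc0 := hc 0 (by omega)
  have hcℓ := hc (ℓ - 2) (by omega)
  have hb' : b ∈ cliqueAt F (ℓ - 2 + 1) := by rwa [show ℓ - 2 + 1 = ℓ - 1 by omega]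
  have ha_iff : ∀ {i}, a ∈ cliqueAt F i ↔ i = 0 := hF.mem_cliqueAt_iff_of_not_mem_adjacent ha
    (fun _ hi => absurd hi (Nat.succ_ne_zero _))
    (fun h => hac (hF.eq_of_mem_cliqueAt_inter_succ (mem_inter.mpr ⟨ha, h⟩) hc0))
  have hb_iff : ∀ {i}, b ∈ cliqueAt F i ↔ i = ℓ - 1 := hF.mem_cliqueAt_iff_of_not_mem_adjacent hb
    (fun i hi h => hbc (hF.eq_of_mem_cliqueAt_inter_succ
      (mem_inter.mpr ⟨(show i = ℓ - 2 by omega) ▸ h, hb'⟩) hcℓ))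
    (fun h => by have := lt_of_mem_cliqueAt h; omega)
  set w : ℕ → V := fun t => if t = 0 then a else if t < ℓ then c (t - 1) else b
  have hmem : ∀ t ≤ ℓ, ∀ i < ℓ, w t ∈ cliqueAt F i ↔ i = t ∨ i + 1 = t := by
    intro t ht i hi
    simp only [w]
    split_ifs with h0 htℓ
    · rw [ha_iff]; omega
    · rw [hF.mem_cliqueAt_iff_of_mem_inter_succ (hc (t - 1) (by omega))]; omega
    · rw [hb_iff]; omega
  refine hF.hasInducedPathLen_of_mem_cliqueAt_iff w hmem fun t ht he => ?_
  obtain ht1 | ht1 := (show 1 ≤ t ∨ t + 1 < ℓ by omega)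
  · have h := (hmem t ht.le (t - 1) (by omega)).mpr (Or.inr (by omega))
    rw [he, hmem (t + 1) ht (t - 1) (by omega)] at h
    omega
  · have h := (hmem (t + 1) ht (t + 1) ht1).mpr (Or.inl rfl)
    rw [← he, hmem t ht.le (t + 1) ht1] at h
    omega

theorem hasInducedPathLen [Nonempty V] : HasInducedPathLen G ℓ := by
  obtain hℓ | hℓ | hℓ : ℓ = 0 ∨ ℓ = 1 ∨ 2 ≤ ℓ := by omega
  · subst hℓ
    exact hF.hasInducedPathLen_of_mem_cliqueAt_iff (fun _ => Classical.arbitrary V)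
      (fun _ _ _ hi => absurd hi (Nat.not_lt_zero _)) (fun _ ht => absurd ht (Nat.not_lt_zero _))
  · subst hℓ
    obtain ⟨x, hx, y, hy, hxy⟩ := one_lt_card.mp (hF.one_lt_card_cliqueAt (i := 0) one_pos)
    refine hF.hasInducedPathLen_of_mem_cliqueAt_iff (fun t => if t = 0 then x else y)
      (fun t ht i hi => ?_) (fun t ht => ?_)
    · obtain rfl : i = 0 := by omega
      rcases Nat.le_one_iff_eq_zero_or_eq_one.mp ht with rfl | rfl <;> simp [hx, hy]
    · obtain rfl : t = 0 := by omega
      simpa using hxy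
  · exact hF.hasInducedPathLen_of_two_le hℓ

end IsCliqueSeq

end CliqueSeq

/-- The longest induced path of a `C_ℓ`-graph has length exactly `ℓ`. -/
theorem stmt6 {V : Type*} (ℓ : ℕ) (G : SimpleGraph V) (h : IsCLGraph G ℓ) :
    LongestInducedPathLen G ℓ := by
  obtain ⟨hconn, F, hF⟩ := h
  have : Nonempty V := hconn.nonempty
  exact ⟨hF.hasInducedPathLen, fun _ => hF.le_of_hasInducedPathLen⟩
end

section
/- Let G be a connected graph on [n] and S ⊂ [n]. The prime ideal P_S(G) = ({x_i, y_i : i ∈ S}) + J_{\tilde{G_1}} + ... + J_{\tilde{G}_{c(S)}} is a minimal prime of J_G if and only if S = ∅, or S ≠ ∅ and for each i ∈ S one has c(S \ {i}) < c(S), where c(S) is the number of connected components of the induced subgraph on [n] \ S and \tilde{G_j} is the complete graph on the vertex set of the j-th component. -/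
open MvPolynomial SimpleGraph Classical
open scoped BigOperators

/-!
`P_T(G)` is the kernel of the monomial map `x_i ↦ s_C t_i`, `y_i ↦ t_i` (for `i ∉ T`, with `C`
the component of `i` in `G - T`; `x_i, y_i ↦ 0` for `i ∈ T`), hence prime: modulo `P_T` every
monomial reduces to a standard one by trading `x_b y_a` for `x_a y_b` (`a < b` in one component),
and distinct standard monomials have distinct images.

Let `q` be a prime with `J_G ⊆ q ⊆ P_T`. It contains `f_ab` whenever `a, b` are joined in `G - T`,
since `x_c f_ab ∈ (f_ac, f_cb)` and `x_c ∉ P_T`; and it contains `x_i, y_i` as soon as `i` has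
neighbours `a, b` in different components of `G - T`, since `x_i f_ab ∈ (f_ib, f_ai)` and
`f_ab ∉ P_T`. Such neighbours exist exactly when `c(T \ {i}) < c(T)`; otherwise
`P_{T \ {i}} ⊊ P_T`, because paths of `G - (T \ {i})` through `i` can be rerouted in `G - T`.
-/

lemma Finsupp.exists_eq_add_single_add_single {α : Type*} {m : α →₀ ℕ} {u v : α} (huv : u ≠ v)
    (hu : m u ≠ 0) (hv : m v ≠ 0) :
    ∃ m₀, m = m₀ + Finsupp.single u 1 + Finsupp.single v 1 := by
  refine ⟨m - Finsupp.single u 1 - Finsupp.single v 1, Finsupp.ext fun w => ?_⟩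
  simp only [Finsupp.add_apply, Finsupp.tsub_apply, Finsupp.single_apply]
  split_ifs <;> subst_vars <;> first | omega | exact absurd rfl huv

section BinomialIdentities

variable {K : Type*} [Field K] {V : Type*}

lemma fij_self (a : V) : fij K a a = 0 := sub_self _

lemma fij_swap (a b : V) : fij K b a = -fij K a b := by
  simp only [fij]; ring

lemma X_inl_mul_fij (a b c : V) :
    X (Sum.inl c) * fij K a b = X (Sum.inl a) * fij K c b + X (Sum.inl b) * fij K a c := by
  simp only [fij]; ring

lemma X_inr_mul_fij (a b c : V) :
    X (Sum.inr c) * fij K a b = X (Sum.inr a) * fij K c b + X (Sum.inr b) * fij K a c := by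
  simp only [fij]; ring

lemma fij_mem_of_forall_lt [LinearOrder V] {I : Ideal (MvPolynomial (V ⊕ V) K)}
    {r : V → V → Prop} (hr : ∀ a b, r a b → r b a) (h : ∀ a b, a < b → r a b → fij K a b ∈ I)
    {a b : V} (hab : r a b) : fij K a b ∈ I := by
  rcases lt_trichotomy a b with hlt | rfl | hgt
  · exact h a b hlt hab
  · rw [fij_self]; exact I.zero_mem
  · rw [← neg_neg (fij K a b), ← fij_swap]; exact I.neg_mem (h b a hgt (hr a b hab))

lemma fij_mem_beIdeal [LinearOrder V] {G : SimpleGraph V} {a b : V} (h : G.Adj a b) :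
    fij K a b ∈ beIdeal K G :=
  fij_mem_of_forall_lt (I := beIdeal K G) (fun _ _ h => h.symm)
    (fun a b hab h => Ideal.subset_span ⟨a, b, hab, h, rfl⟩) h

end BinomialIdentities

section DeleteVertices

variable {V : Type*} {G : SimpleGraph V} {T : Set V}

def SeparatesNeighbors (G : SimpleGraph V) (T : Set V) (i : V) : Prop :=
  ∃ a b, a ∉ T ∧ b ∉ T ∧ G.Adj i a ∧ G.Adj i b ∧ ¬ (delVerts G T).Reachable a b

lemma delVerts_adj {a b : V} : (delVerts G T).Adj a b ↔ G.Adj a b ∧ a ∉ T ∧ b ∉ T := Iff.rfl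

lemma delVerts_reachable_iff_induce {a b : V} (ha : a ∉ T) (hb : b ∉ T) :
    (delVerts G T).Reachable a b ↔ (G.induce Tᶜ).Reachable ⟨a, ha⟩ ⟨b, hb⟩ := by
  let embed : G.induce Tᶜ →g delVerts G T :=
    { toFun := Subtype.val, map_rel' := fun {u v} huv => ⟨huv, u.2, v.2⟩ }
  refine ⟨fun h => ?_, fun h => h.map embed⟩
  obtain ⟨w⟩ := h
  induction w with
  | nil => rfl
  | cons h _ ih =>
    exact (show (G.induce Tᶜ).Adj ⟨_, ha⟩ ⟨_, h.2.2⟩ from h.1).reachable.trans (ih h.2.2 hb)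

lemma delVerts_reachable_of_diff_singleton {i : V} (hsep : ¬ SeparatesNeighbors G T i)
    {a b : V} (ha : a ∉ T) (hb : b ∉ T) (h : (delVerts G (T \ {i})).Reachable a b) :
    (delVerts G T).Reachable a b := by
  have H : ∀ a c, a ∉ T → c ∉ T → G.Adj i a → G.Adj i c → (delVerts G T).Reachable a c :=
    fun a c ha hc hia hic => not_not.1 fun hnr => hsep ⟨a, c, ha, hc, hia, hic, hnr⟩
  obtain ⟨w⟩ := h
  -- a walk may pass through `i`, which is then bypassed via two of its neighbours
  suffices key : ∀ {u v}, (delVerts G (T \ {i})).Walk u v → v ∉ T →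
      (u ∉ T → (delVerts G T).Reachable u v) ∧
      (u = i → ∀ a ∉ T, G.Adj i a → (delVerts G T).Reachable a v) from (key w hb).1 ha
  intro u v w hv
  induction w with
  | nil =>
    refine ⟨fun _ => .rfl, fun hu a ha hia => ?_⟩
    subst hu
    exact (delVerts_adj.2 ⟨hia.symm, ha, hv⟩).reachable
  | @cons u c _ huc _ ih =>
    have hc : c ∈ T → c = i := fun hcT => by_contra fun hci => huc.2.2 ⟨hcT, hci⟩
    refine ⟨fun hu => ?_, fun hu a ha hia => ?_⟩
    · by_cases hcT : c ∈ T
      · exact (ih hv).2 (hc hcT) u hu (hc hcT ▸ huc.1.symm)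
      · exact (delVerts_adj.2 ⟨huc.1, hu, hcT⟩).reachable.trans ((ih hv).1 hcT)
    · subst hu
      have hcT : c ∉ T := fun hcT => huc.1.ne (hc hcT).symm
      exact (H a c ha hcT hia huc.1).trans ((ih hv).1 hcT)

end DeleteVertices

section ComponentCount

variable {V : Type*} {G : SimpleGraph V} {T : Set V} {i : V}

lemma compl_subset_compl_diff_singleton : (Tᶜ : Set V) ⊆ (T \ {i})ᶜ :=
  Set.compl_subset_compl.2 Set.sdiff_subset

variable (G T i) in
def componentMapDiffSingleton :
    (G.induce Tᶜ).ConnectedComponent → (G.induce (T \ {i})ᶜ).ConnectedComponent :=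
  ConnectedComponent.map (G.induceHomOfLE compl_subset_compl_diff_singleton).toHom

variable [Finite V]

lemma numComp_le_numComp_diff_singleton (hsep : ¬ SeparatesNeighbors G T i) :
    numComp G T ≤ numComp G (T \ {i}) := by
  refine Nat.card_le_card_of_injective (componentMapDiffSingleton G T i) fun C D => ?_
  refine ConnectedComponent.ind₂ (fun ⟨a, ha⟩ ⟨b, hb⟩ h => ?_) C D
  rw [componentMapDiffSingleton, ConnectedComponent.map_mk, ConnectedComponent.map_mk,
    ConnectedComponent.eq] at h
  rw [ConnectedComponent.eq, ← delVerts_reachable_iff_induce]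
  exact delVerts_reachable_of_diff_singleton hsep ha hb
    ((delVerts_reachable_iff_induce _ _).2 h)

lemma numComp_diff_singleton_lt {a b : V} (ha : a ∉ T) (hb : b ∉ T) (hia : G.Adj i a)
    (hib : G.Adj i b) (hnr : ¬ (delVerts G T).Reachable a b) :
    numComp G (T \ {i}) < numComp G T := by
  have := Fintype.ofFinite (G.induce Tᶜ).ConnectedComponent
  have := Fintype.ofFinite (G.induce (T \ {i})ᶜ).ConnectedComponent
  rw [numComp, numComp, Nat.card_eq_fintype_card, Nat.card_eq_fintype_card]
  have hi : i ∈ (T \ {i})ᶜ := by simp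
  have adj_ai : (G.induce (T \ {i})ᶜ).Adj ⟨a, compl_subset_compl_diff_singleton ha⟩ ⟨i, hi⟩ :=
    hia.symm
  have adj_ib : (G.induce (T \ {i})ᶜ).Adj ⟨i, hi⟩ ⟨b, compl_subset_compl_diff_singleton hb⟩ :=
    hib
  refine Fintype.card_lt_of_surjective_not_injective (componentMapDiffSingleton G T i)
    (fun D => ?_) fun hinj => hnr ?_
  · induction D using ConnectedComponent.ind with | h v => ?_
    obtain ⟨v, hv⟩ := v
    by_cases hvT : v ∈ T
    · obtain rfl : v = i := by simpa [hvT] using hv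
      exact ⟨(G.induce Tᶜ).connectedComponentMk ⟨a, ha⟩, ConnectedComponent.sound adj_ai.reachable⟩
    · exact ⟨(G.induce Tᶜ).connectedComponentMk ⟨v, hvT⟩, rfl⟩
  · rw [delVerts_reachable_iff_induce ha hb, ← ConnectedComponent.eq]
    exact hinj (ConnectedComponent.sound (adj_ai.reachable.trans adj_ib.reachable))

lemma numComp_diff_singleton_lt_iff :
    numComp G (T \ {i}) < numComp G T ↔ SeparatesNeighbors G T i :=
  ⟨fun h => not_not.1 fun hsep => (numComp_le_numComp_diff_singleton hsep).not_gt h,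
    fun ⟨_, _, ha, hb, hia, hib, hnr⟩ => numComp_diff_singleton_lt ha hb hia hib hnr⟩

end ComponentCount

section CutPrime

variable {K : Type*} [Field K] {V : Type*} [LinearOrder V] {G : SimpleGraph V} {T : Set V}

lemma X_inl_mem_cutPrime {i : V} (hi : i ∈ T) : X (Sum.inl i) ∈ cutPrime K G T :=
  Ideal.subset_span (Or.inl ⟨i, hi, Or.inl rfl⟩)

lemma X_inr_mem_cutPrime {i : V} (hi : i ∈ T) : X (Sum.inr i) ∈ cutPrime K G T :=
  Ideal.subset_span (Or.inl ⟨i, hi, Or.inr rfl⟩)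

lemma fij_mem_cutPrime {a b : V} (ha : a ∉ T) (hb : b ∉ T) (h : (delVerts G T).Reachable a b) :
    fij K a b ∈ cutPrime K G T :=
  fij_mem_of_forall_lt (r := fun a b => a ∉ T ∧ b ∉ T ∧ (delVerts G T).Reachable a b)
    (fun _ _ h => ⟨h.2.1, h.1, h.2.2.symm⟩)
    (fun a b hab h => Ideal.subset_span (Or.inr ⟨a, b, hab, h.1, h.2.1, h.2.2, rfl⟩))
    ⟨ha, hb, h⟩

lemma fij_mem_cutPrime_of_mem {a b : V} (h : a ∈ T ∨ b ∈ T) : fij K a b ∈ cutPrime K G T := by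
  rcases h with h | h
  · exact sub_mem (Ideal.mul_mem_right _ _ (X_inl_mem_cutPrime h))
      (Ideal.mul_mem_left _ _ (X_inr_mem_cutPrime h))
  · exact sub_mem (Ideal.mul_mem_left _ _ (X_inr_mem_cutPrime h))
      (Ideal.mul_mem_right _ _ (X_inl_mem_cutPrime h))

lemma beIdeal_le_cutPrime : beIdeal K G ≤ cutPrime K G T := by
  refine Ideal.span_le.2 ?_
  rintro _ ⟨a, b, -, hab, rfl⟩
  by_cases h : a ∈ T ∨ b ∈ T
  · exact fij_mem_cutPrime_of_mem h
  · push Not at h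
    exact fij_mem_cutPrime h.1 h.2 (delVerts_adj.2 ⟨hab, h⟩).reachable

lemma cutPrime_diff_singleton_le {i : V} (hsep : ¬ SeparatesNeighbors G T i) :
    cutPrime K G (T \ {i}) ≤ cutPrime K G T := by
  refine Ideal.span_le.2 ?_
  rintro _ (⟨j, hj, rfl | rfl⟩ | ⟨a, b, -, -, -, hr, rfl⟩)
  · exact X_inl_mem_cutPrime hj.1
  · exact X_inr_mem_cutPrime hj.1
  · by_cases h : a ∈ T ∨ b ∈ T
    · exact fij_mem_cutPrime_of_mem h
    · push Not at h
      exact fij_mem_cutPrime h.1 h.2 (delVerts_reachable_of_diff_singleton hsep h.1 h.2 hr)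

lemma monomial_swap_sub_mem_cutPrime {a b : V} (ha : a ∉ T) (hb : b ∉ T)
    (h : (delVerts G T).Reachable a b) (m : (V ⊕ V) →₀ ℕ) :
    monomial (m + Finsupp.single (Sum.inl b) 1 + Finsupp.single (Sum.inr a) 1) (1 : K) -
      monomial (m + Finsupp.single (Sum.inl a) 1 + Finsupp.single (Sum.inr b) 1) 1 ∈
        cutPrime K G T := by
  convert neg_mem (Ideal.mul_mem_left _ (monomial m 1) (fij_mem_cutPrime (K := K) ha hb h)) using 1
  simp only [monomial_add_single, pow_one, fij]
  ring

end CutPrime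

noncomputable section Primality

variable {K : Type*} [Field K] {V : Type*} {G : SimpleGraph V} {T : Set V}

-- `Sum.inl i` is the variable `t_i` and `Sum.inr C` the variable `s_C`.
variable (K G T) in
def cutParam : V ⊕ V → MvPolynomial (V ⊕ (delVerts G T).ConnectedComponent) K
  | Sum.inl i => if i ∈ T then 0 else
      X (Sum.inr ((delVerts G T).connectedComponentMk i)) * X (Sum.inl i)
  | Sum.inr i => if i ∈ T then 0 else X (Sum.inl i)

variable (K G T) in
def cutHom :
    MvPolynomial (V ⊕ V) K →ₐ[K] MvPolynomial (V ⊕ (delVerts G T).ConnectedComponent) K :=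
  aeval (cutParam K G T)

variable (G T) in
def cutExpVar : V ⊕ V → (V ⊕ (delVerts G T).ConnectedComponent) →₀ ℕ
  | Sum.inl i => Finsupp.single (Sum.inr ((delVerts G T).connectedComponentMk i)) 1 +
      Finsupp.single (Sum.inl i) 1
  | Sum.inr i => Finsupp.single (Sum.inl i) 1

variable (G T) in
def cutExp (m : (V ⊕ V) →₀ ℕ) : (V ⊕ (delVerts G T).ConnectedComponent) →₀ ℕ :=
  m.sum fun v k => k • cutExpVar G T v

lemma cutHom_monomial {m : (V ⊕ V) →₀ ℕ}
    (hm : ∀ i ∈ T, m (Sum.inl i) = 0 ∧ m (Sum.inr i) = 0) (c : K) :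
    cutHom K G T (monomial m c) = monomial (cutExp G T m) c := by
  rw [cutHom, aeval_monomial, cutExp, Finsupp.sum, monomial_sum_index, Finsupp.prod,
    algebraMap_eq]
  refine congrArg _ (Finset.prod_congr rfl fun v hv => ?_)
  have hv := Finsupp.mem_support_iff.1 hv
  suffices cutParam K G T v = monomial (cutExpVar G T v) 1 by rw [this, monomial_pow, one_pow]
  rcases v with i | i
  · have hi : i ∉ T := fun hi => hv (hm i hi).1
    simp [cutParam, cutExpVar, hi, X, monomial_mul]
  · have hi : i ∉ T := fun hi => hv (hm i hi).2
    simp [cutParam, cutExpVar, hi, X]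

lemma cutExp_inl [Fintype V] (m : (V ⊕ V) →₀ ℕ) (i : V) :
    cutExp G T m (Sum.inl i) = m (Sum.inl i) + m (Sum.inr i) := by
  simp [cutExp, Finsupp.sum_fintype, Fintype.sum_sum_type, cutExpVar, Finsupp.single_apply]

lemma cutExp_inr [Fintype V] (m : (V ⊕ V) →₀ ℕ) (C : (delVerts G T).ConnectedComponent) :
    cutExp G T m (Sum.inr C) =
      ∑ j with (delVerts G T).connectedComponentMk j = C, m (Sum.inl j) := by
  simp [cutExp, Finsupp.sum_fintype, Fintype.sum_sum_type, cutExpVar, Finsupp.single_apply,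
    Finset.sum_filter]

variable [LinearOrder V]

variable (G T) in
def IsStandard (m : (V ⊕ V) →₀ ℕ) : Prop :=
  (∀ i ∈ T, m (Sum.inl i) = 0 ∧ m (Sum.inr i) = 0) ∧
  ∀ a b, a < b → (delVerts G T).Reachable a b → m (Sum.inl b) ≠ 0 → m (Sum.inr a) = 0

lemma cutPrime_le_ker_cutHom : cutPrime K G T ≤ RingHom.ker (cutHom K G T) := by
  refine Ideal.span_le.2 ?_
  rintro _ (⟨i, hi, rfl | rfl⟩ | ⟨a, b, -, ha, hb, hr, rfl⟩)
  · simp [cutHom, cutParam, hi]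
  · simp [cutHom, cutParam, hi]
  · simp [cutHom, cutParam, fij, ha, hb, ConnectedComponent.sound hr]; ring

variable [Fintype V]

lemma IsStandard.not_lt_of_cutExp_eq {m m' : (V ⊕ V) →₀ ℕ} (hm : IsStandard G T m)
    (h : cutExp G T m = cutExp G T m') {a : V}
    (hbelow : ∀ j < a, m (Sum.inl j) = m' (Sum.inl j)) :
    ¬ m (Sum.inl a) < m' (Sum.inl a) := by
  intro hlt
  have hya : m (Sum.inr a) ≠ 0 := by
    have := congrArg (· (Sum.inl a)) h
    simp only [cutExp_inl] at this
    omega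
  have hC := congrArg (· (Sum.inr ((delVerts G T).connectedComponentMk a))) h
  simp only [cutExp_inr] at hC
  -- `m` has a `y` at `a`, hence no `x` beyond `a` in the component of `a`
  refine hC.not_lt (Finset.sum_lt_sum (fun j hj => ?_) ⟨a, by simp, hlt⟩)
  rcases lt_trichotomy j a with hja | rfl | haj
  · exact (hbelow j hja).le
  · exact hlt.le
  · have hr : (delVerts G T).Reachable a j :=
      (ConnectedComponent.exact (Finset.mem_filter.1 hj).2).symm
    rw [not_not.1 fun hj0 => hya (hm.2 a j haj hr hj0)]
    exact Nat.zero_le _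

lemma IsStandard.eq_of_cutExp_eq {m m' : (V ⊕ V) →₀ ℕ} (hm : IsStandard G T m)
    (hm' : IsStandard G T m') (h : cutExp G T m = cutExp G T m') : m = m' := by
  have hx : ∀ a, m (Sum.inl a) = m' (Sum.inl a) := by
    intro a
    induction a using WellFoundedLT.induction with
    | _ a ih =>
      exact le_antisymm (not_lt.1 (hm'.not_lt_of_cutExp_eq h.symm fun j hj => (ih j hj).symm))
        (not_lt.1 (hm.not_lt_of_cutExp_eq h ih))
  ext (i | i)
  · exact hx i
  · have := congrArg (· (Sum.inl i)) h
    simp only [cutExp_inl, hx i] at this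
    omega

variable (V) in
def xWeight (m : (V ⊕ V) →₀ ℕ) : ℕ :=
  ∑ i, ((Fintype.orderIsoFinOfCardEq V rfl).symm i : ℕ) * m (Sum.inl i)

lemma xWeight_add (m m' : (V ⊕ V) →₀ ℕ) : xWeight V (m + m') = xWeight V m + xWeight V m' := by
  simp [xWeight, mul_add, Finset.sum_add_distrib]

lemma xWeight_single_inl (i : V) :
    xWeight V (Finsupp.single (Sum.inl i) 1) = (Fintype.orderIsoFinOfCardEq V rfl).symm i := by
  simp [xWeight, Finsupp.single_apply]

lemma xWeight_single_inr (i : V) : xWeight V (Finsupp.single (Sum.inr i) 1) = 0 := by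
  simp [xWeight]

lemma exists_standard_sub_monomial_mem_cutPrime (m : (V ⊕ V) →₀ ℕ) :
    ∃ q, monomial m (1 : K) - q ∈ cutPrime K G T ∧ ∀ m' ∈ q.support, IsStandard G T m' := by
  induction hw : xWeight V m using Nat.strong_induction_on generalizing m with
  | _ w ih =>
  by_cases hT : ∃ i ∈ T, m (Sum.inl i) ≠ 0 ∨ m (Sum.inr i) ≠ 0
  · obtain ⟨i, hi, hxy⟩ := hT
    refine ⟨0, ?_, by simp⟩
    rw [sub_zero]
    rcases hxy with h | h
    · exact Ideal.mem_of_dvd _ (X_dvd_monomial.2 (Or.inr h)) (X_inl_mem_cutPrime hi)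
    · exact Ideal.mem_of_dvd _ (X_dvd_monomial.2 (Or.inr h)) (X_inr_mem_cutPrime hi)
  push Not at hT
  by_cases hbad : ∃ a b, a < b ∧ (delVerts G T).Reachable a b ∧
      m (Sum.inl b) ≠ 0 ∧ m (Sum.inr a) ≠ 0
  · obtain ⟨a, b, hab, hr, hb, ha⟩ := hbad
    have haT : a ∉ T := fun h => ha (hT a h).2
    have hbT : b ∉ T := fun h => hb (hT b h).1
    obtain ⟨m₀, rfl⟩ := Finsupp.exists_eq_add_single_add_single Sum.inl_ne_inr hb ha
    have hlt :
        xWeight V (m₀ + Finsupp.single (Sum.inl a) 1 + Finsupp.single (Sum.inr b) 1) < w := by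
      have := (Fintype.orderIsoFinOfCardEq V rfl).symm.strictMono hab
      simp only [← hw, xWeight_add, xWeight_single_inl, xWeight_single_inr]
      omega
    obtain ⟨q, hq, hstd⟩ := ih _ hlt _ rfl
    exact ⟨q, by simpa using add_mem (monomial_swap_sub_mem_cutPrime haT hbT hr m₀) hq, hstd⟩
  · push Not at hbad
    refine ⟨monomial m 1, by simp, fun m' hm' => ?_⟩
    rw [Finset.mem_singleton.1 (support_monomial_subset hm')]
    exact ⟨hT, hbad⟩

lemma exists_standard_sub_mem_cutPrime (p : MvPolynomial (V ⊕ V) K) :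
    ∃ q, p - q ∈ cutPrime K G T ∧ ∀ m ∈ q.support, IsStandard G T m := by
  induction p using MvPolynomial.induction_on' with
  | monomial m c =>
    obtain ⟨q, hq, hstd⟩ := exists_standard_sub_monomial_mem_cutPrime (K := K) (G := G) (T := T) m
    refine ⟨c • q, ?_, fun m' hm' => hstd m' (support_smul hm')⟩
    rw [show monomial m c = c • monomial m (1 : K) by rw [smul_monomial, smul_eq_mul, mul_one],
      ← smul_sub]
    exact Submodule.smul_of_tower_mem _ c hq
  | add p p' hp hp' =>
    obtain ⟨q, hq, hstd⟩ := hp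
    obtain ⟨q', hq', hstd'⟩ := hp'
    refine ⟨q + q', by simpa [add_sub_add_comm] using add_mem hq hq', fun m hm => ?_⟩
    rcases Finset.mem_union.1 (support_add hm) with hm | hm
    exacts [hstd m hm, hstd' m hm]

lemma coeff_cutExp_cutHom {q : MvPolynomial (V ⊕ V) K}
    (hq : ∀ m ∈ q.support, IsStandard G T m) {m : (V ⊕ V) →₀ ℕ} (hm : m ∈ q.support) :
    coeff (cutExp G T m) (cutHom K G T q) = coeff m q := by
  conv_lhs => rw [q.as_sum]
  rw [map_sum, coeff_sum, Finset.sum_eq_single m]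
  · rw [cutHom_monomial (hq m hm).1, coeff_monomial, if_pos rfl]
  · intro m' hm' hne
    rw [cutHom_monomial (hq m' hm').1, coeff_monomial,
      if_neg fun h => hne ((hq m' hm').eq_of_cutExp_eq (hq m hm) h)]
  · exact fun h => absurd hm h

lemma eq_zero_of_cutHom_eq_zero {q : MvPolynomial (V ⊕ V) K}
    (hq : ∀ m ∈ q.support, IsStandard G T m) (h : cutHom K G T q = 0) : q = 0 := by
  by_contra hne
  obtain ⟨m, hm⟩ := support_nonempty.2 hne
  exact mem_support_iff.1 hm (by rw [← coeff_cutExp_cutHom hq hm, h, coeff_zero])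

theorem ker_cutHom : RingHom.ker (cutHom K G T) = cutPrime K G T := by
  refine le_antisymm (fun p hp => ?_) cutPrime_le_ker_cutHom
  obtain ⟨q, hpq, hq⟩ := exists_standard_sub_mem_cutPrime (K := K) (G := G) (T := T) p
  have hq0 : cutHom K G T q = 0 := by
    simpa [RingHom.mem_ker.1 hp] using cutPrime_le_ker_cutHom hpq
  rwa [eq_zero_of_cutHom_eq_zero hq hq0, sub_zero] at hpq

theorem cutPrime_isPrime : (cutPrime K G T).IsPrime :=
  ker_cutHom (K := K) (G := G) (T := T) ▸ RingHom.ker_isPrime _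

lemma X_inl_notMem_cutPrime {i : V} (hi : i ∉ T) : X (Sum.inl i) ∉ cutPrime K G T := by
  rw [← ker_cutHom, RingHom.mem_ker]
  simp [cutHom, cutParam, hi, X_ne_zero]

lemma fij_notMem_cutPrime {a b : V} (ha : a ∉ T) (hb : b ∉ T)
    (hnr : ¬ (delVerts G T).Reachable a b) : fij K a b ∉ cutPrime K G T := by
  rw [← ker_cutHom, RingHom.mem_ker]
  have : cutHom K G T (fij K a b) = X (Sum.inl a) * X (Sum.inl b) *
      (X (Sum.inr ((delVerts G T).connectedComponentMk a)) -
        X (Sum.inr ((delVerts G T).connectedComponentMk b))) := by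
    simp [cutHom, cutParam, fij, ha, hb]
    ring
  rw [this]
  exact mul_ne_zero (mul_ne_zero (X_ne_zero _) (X_ne_zero _))
    (sub_ne_zero.2 fun h => hnr (ConnectedComponent.exact (Sum.inr_injective (X_injective h))))

end Primality

section MinimalPrimes

variable {K : Type*} [Field K] {V : Type*} [Fintype V] [LinearOrder V]
  {G : SimpleGraph V} {T : Set V} {q : Ideal (MvPolynomial (V ⊕ V) K)}

lemma fij_mem_of_reachable (hq : q.IsPrime) (hJ : beIdeal K G ≤ q) (hqP : q ≤ cutPrime K G T)
    {a b : V} (h : (delVerts G T).Reachable a b) : fij K a b ∈ q := by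
  obtain ⟨w⟩ := h
  induction w with
  | nil => rw [fij_self]; exact q.zero_mem
  | @cons a c b hac _ ih =>
    have hmem : X (Sum.inl c) * fij K a b ∈ q := by
      rw [X_inl_mul_fij]
      exact add_mem (q.mul_mem_left _ ih) (q.mul_mem_left _ (hJ (fij_mem_beIdeal hac.1)))
    exact (hq.mem_or_mem hmem).resolve_left fun hc => X_inl_notMem_cutPrime hac.2.2 (hqP hc)

lemma X_mem_of_separatesNeighbors (hq : q.IsPrime) (hJ : beIdeal K G ≤ q)
    (hqP : q ≤ cutPrime K G T) {i : V} (hsep : SeparatesNeighbors G T i) :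
    X (Sum.inl i) ∈ q ∧ X (Sum.inr i) ∈ q := by
  obtain ⟨a, b, ha, hb, hia, hib, hnr⟩ := hsep
  have hfab : fij K a b ∉ q := fun h => fij_notMem_cutPrime ha hb hnr (hqP h)
  have hfib : fij K i b ∈ q := hJ (fij_mem_beIdeal hib)
  have hfai : fij K a i ∈ q := hJ (fij_mem_beIdeal hia.symm)
  constructor
  · refine (hq.mem_or_mem ?_).resolve_right hfab
    rw [X_inl_mul_fij]
    exact add_mem (q.mul_mem_left _ hfib) (q.mul_mem_left _ hfai)
  · refine (hq.mem_or_mem ?_).resolve_right hfab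
    rw [X_inr_mul_fij]
    exact add_mem (q.mul_mem_left _ hfib) (q.mul_mem_left _ hfai)

lemma cutPrime_le_of_separatesNeighbors (hq : q.IsPrime) (hJ : beIdeal K G ≤ q)
    (hqP : q ≤ cutPrime K G T) (hsep : ∀ i ∈ T, SeparatesNeighbors G T i) :
    cutPrime K G T ≤ q := by
  refine Ideal.span_le.2 ?_
  rintro _ (⟨i, hi, rfl | rfl⟩ | ⟨a, b, -, -, -, hr, rfl⟩)
  · exact (X_mem_of_separatesNeighbors hq hJ hqP (hsep i hi)).1
  · exact (X_mem_of_separatesNeighbors hq hJ hqP (hsep i hi)).2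
  · exact fij_mem_of_reachable hq hJ hqP hr

theorem cutPrime_mem_minimalPrimes_iff :
    cutPrime K G T ∈ (beIdeal K G).minimalPrimes ↔
      ∀ i ∈ T, numComp G (T \ {i}) < numComp G T := by
  simp only [numComp_diff_singleton_lt_iff]
  refine ⟨fun hmin i hi => not_not.1 fun hsep => ?_, fun hsep =>
    ⟨⟨cutPrime_isPrime, beIdeal_le_cutPrime⟩, fun q ⟨hq, hJ⟩ hqP =>
      cutPrime_le_of_separatesNeighbors hq hJ hqP hsep⟩⟩
  have hle := hmin.2 ⟨cutPrime_isPrime, beIdeal_le_cutPrime⟩ (cutPrime_diff_singleton_le hsep)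
  exact X_inl_notMem_cutPrime (by simp) (hle (X_inl_mem_cutPrime (K := K) (G := G) hi))

end MinimalPrimes

theorem stmt10_general (K : Type*) [Field K] (n : ℕ) (G : SimpleGraph (Fin n))
    (T : Set (Fin n)) :
    cutPrime K G T ∈ (beIdeal K G).minimalPrimes ↔
      (T = ∅ ∨ (T ≠ ∅ ∧ ∀ i ∈ T, numComp G (T \ {i}) < numComp G T)) := by
  rw [cutPrime_mem_minimalPrimes_iff]
  rcases T.eq_empty_or_nonempty with rfl | hT
  · simp
  · simp [hT.ne_empty]

/-- For a connected `G` and `T ⊆ [n]`, `P_T(G)` is a minimal prime of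
`J_G` iff `T = ∅`, or `T ≠ ∅` and `c(T ∖ {i}) < c(T)` for each `i ∈ T`. -/
theorem stmt10 (K : Type*) [Field K] (n : ℕ) (G : SimpleGraph (Fin n))
    (hG : G.Connected) (T : Set (Fin n)) :
    cutPrime K G T ∈ (beIdeal K G).minimalPrimes ↔
      (T = ∅ ∨ (T ≠ ∅ ∧ ∀ i ∈ T, numComp G (T \ {i}) < numComp G T)) :=
  stmt10_general K n G T
end
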